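/- Let γ ≤ 0 and suppose S ≤ 0. Then Z ≤ γ if and only if (1 + γ²/n)·S² − γ²·Q ≥ 0. (Case 2 of the feasibility reformulation of the minimization Z-test.) -/

import Mathlib

/-!
Both `S` and `γ · √n · σ̂` are nonpositive, so `Z ≤ γ`, i.e. `S ≤ γ √n σ̂`, is equivalent to
`γ² n σ̂² ≤ S²`. Since `n σ̂² = Q - S²/n`, this is `γ² (Q - S²/n) ≤ S²`, which rearranges to the
stated quadratic condition.
-/

lemma le_iff_sq_le_sq_of_nonpos {R : Type*} [Ring R] [LinearOrder R] [IsStrictOrderedRing R]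
    {a b : R} (ha : a ≤ 0) (hb : b ≤ 0) : a ≤ b ↔ b ^ 2 ≤ a ^ 2 := by
  rw [← neg_sq b, ← neg_sq a, sq_le_sq₀ (neg_nonneg.mpr hb) (neg_nonneg.mpr ha), neg_le_neg_iff]

lemma div_le_iff_sq_le_sq_of_nonpos {a c d : ℝ} (ha : a ≤ 0) (hc : c ≤ 0) (hd : 0 < d) :
    a / d ≤ c ↔ c ^ 2 * d ^ 2 ≤ a ^ 2 := by
  rw [div_le_iff₀ hd, le_iff_sq_le_sq_of_nonpos ha (mul_nonpos_of_nonpos_of_nonneg hc hd.le),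
    mul_pow]

lemma sq_sqrt_mul_sqrt_variance {n : ℕ} (hn : 1 ≤ n) {S Q : ℝ}
    (hvar : 0 ≤ Q / n - (S / n) ^ 2) :
    (Real.sqrt n * Real.sqrt (Q / n - (S / n) ^ 2)) ^ 2 = Q - S ^ 2 / n := by
  have hn0 : (n : ℝ) ≠ 0 := by positivity
  rw [mul_pow, Real.sq_sqrt n.cast_nonneg, Real.sq_sqrt hvar]
  field_simp

theorem stmt_1_general (n : ℕ) (hn : 1 ≤ n)
    (S Q σ Z : ℝ)
    (hσ : σ = Real.sqrt (Q / n - (S / n) ^ 2)) (hσpos : 0 < σ)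
    (hZ : Z = S / (Real.sqrt n * σ))
    (γ : ℝ) (hγ : γ ≤ 0) (hSneg : S ≤ 0) :
    Z ≤ γ ↔ 0 ≤ (1 + γ ^ 2 / n) * S ^ 2 - γ ^ 2 * Q := by
  have hvar : 0 ≤ Q / n - (S / n) ^ 2 := (Real.sqrt_pos.mp (hσ ▸ hσpos)).le
  have hscale : 0 < Real.sqrt n * σ := mul_pos (Real.sqrt_pos.mpr (by positivity)) hσpos
  have hrearrange : (1 + γ ^ 2 / n) * S ^ 2 - γ ^ 2 * Q = S ^ 2 - γ ^ 2 * (Q - S ^ 2 / n) := by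
    ring
  rw [hZ, div_le_iff_sq_le_sq_of_nonpos hSneg hγ hscale, hσ, sq_sqrt_mul_sqrt_variance hn hvar,
    hrearrange, sub_nonneg]

theorem stmt_1 (n : ℕ) (hn : 1 ≤ n) (t : Fin n → ℝ)
    (S Q σ Z : ℝ)
    (hS : S = ∑ k, t k) (hQ : Q = ∑ k, (t k) ^ 2)
    (hσ : σ = Real.sqrt (Q / n - (S / n) ^ 2)) (hσpos : 0 < σ)
    (hZ : Z = S / (Real.sqrt n * σ))
    (γ : ℝ) (hγ : γ ≤ 0) (hSneg : S ≤ 0) :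
    Z ≤ γ ↔ 0 ≤ (1 + γ ^ 2 / n) * S ^ 2 - γ ^ 2 * Q :=
  stmt_1_general n hn S Q σ Z hσ hσpos hZ γ hγ hSneg
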